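/- For every real ε > 0 and every positive integer k, the quantity λ = 2π²εk·K₁(πεk)/K₀(πεk) satisfies the growth bounds 2π²εk ≤ 2π²εk·(√((πεk)² + πεk + 1) + 1)/(πεk + 1) ≤ λ ≤ 2π²εk + π. -/

import Mathlib

open Real

/-- Modified Bessel function of the second kind of order `j`:
`K_j(z) = ∫₀^∞ exp (−z cosh t) * cosh (j t) dt`. -/
noncomputable def besselK (j : ℕ) (z : ℝ) : ℝ :=
  ∫ t in Set.Ioi (0 : ℝ), Real.exp (-z * Real.cosh t) * Real.cosh ((j : ℝ) * t)

/-!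
Write `w t = exp (-z cosh t)`, so that `K₀ = ∫ w` and `K₁ = ∫ w cosh` over `(0, ∞)`.
Since `sinh² = (cosh - 1)(cosh + 1)`, the function `w · sinh / (cosh + 1)` has derivative
`w / (cosh + 1) - z w (cosh - 1)`, and integrating it gives `z (K₁ - K₀) = ∫ w / (cosh + 1)`.
Bounding `1 / (cosh + 1) ≤ 1 / 2` yields `K₁ / K₀ ≤ 1 + 1 / (2z)`, while the Cauchy–Schwarz
inequality `(∫ w)² ≤ (∫ w (cosh + 1)) (∫ w / (cosh + 1))` yields `K₀² ≤ z (K₁² - K₀²)`,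
a quadratic inequality for `K₁ / K₀` that gives the lower bound.
-/

open MeasureTheory Set Filter Topology

theorem sq_integral_le_integral_mul_mul_integral_div {α : Type*} [MeasurableSpace α]
    {μ : Measure α} {f g : α → ℝ} (hf : ∀ x, 0 ≤ f x) (hg : ∀ x, 0 < g x)
    (hf_int : Integrable f μ) (hfg_int : Integrable (fun x => f x * g x) μ)
    (hfdg_int : Integrable (fun x => f x / g x) μ) :
    (∫ x, f x ∂μ) ^ 2 ≤ (∫ x, f x * g x ∂μ) * ∫ x, f x / g x ∂μ := by
  -- `s ↦ ∫ f (s g - 1)² / g` is a nonnegative quadratic, so its discriminant is nonpositive.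
  have hquad : ∀ s : ℝ, 0 ≤ (∫ x, f x * g x ∂μ) * (s * s) + (-2 * ∫ x, f x ∂μ) * s +
      ∫ x, f x / g x ∂μ := by
    intro s
    have hpoint : ∀ x, 0 ≤ s ^ 2 * (f x * g x) - 2 * s * f x + f x / g x := fun x => by
      have hgx := (hg x).ne'
      have : s ^ 2 * (f x * g x) - 2 * s * f x + f x / g x = f x * (s * g x - 1) ^ 2 / g x := by
        field_simp; ring
      rw [this]
      exact div_nonneg (mul_nonneg (hf x) (sq_nonneg _)) (hg x).le
    have : 0 ≤ ∫ x, (s ^ 2 * (f x * g x) - 2 * s * f x + f x / g x) ∂μ :=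
      integral_nonneg hpoint
    rw [integral_add, integral_sub, integral_const_mul, integral_const_mul] at this
    · linarith
    exacts [hfg_int.const_mul _, hf_int.const_mul _,
      (hfg_int.const_mul _).sub (hf_int.const_mul _), hfdg_int]
  have := discrim_le_zero hquad
  rw [discrim] at this
  linarith

theorem one_le_sqrt_add_one_div {x : ℝ} (hx : 0 ≤ x) :
    1 ≤ (√(x ^ 2 + x + 1) + 1) / (x + 1) := by
  have hsqrt : x ≤ √(x ^ 2 + x + 1) := Real.le_sqrt_of_sq_le (by linarith)
  rw [one_le_div (by linarith)]
  linarith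

theorem sqrt_add_one_div_le_of_one_le_mul_sq_sub_one {x r : ℝ} (hx : 0 ≤ x) (hr : 0 ≤ r)
    (h : 1 ≤ x * (r ^ 2 - 1)) : (√(x ^ 2 + x + 1) + 1) / (x + 1) ≤ r := by
  have hr1 : 1 ≤ r := by
    by_contra! hlt
    have hsq : r ^ 2 ≤ 1 := by nlinarith
    nlinarith [mul_nonneg hx (sub_nonneg.2 hsq)]
  have hsqrt : √(x ^ 2 + x + 1) ≤ (x + 1) * r - 1 := by
    rw [Real.sqrt_le_left (by nlinarith)]
    nlinarith [mul_nonneg (by linarith : 0 ≤ x + 1) (sq_nonneg (r - 1)),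
      mul_le_mul_of_nonneg_left h (by linarith : 0 ≤ x + 1)]
  rw [div_le_iff₀ (by linarith)]
  linarith

section Integrability

variable {z : ℝ}

theorem cosh_mul_exp_neg_mul_cosh_le (hz : 0 < z) (t : ℝ) :
    cosh t * exp (-z * cosh t) ≤ 4 / z ^ 2 * exp (-t) := by
  have hexp : (z * cosh t) ^ 2 / 2 ≤ exp (z * cosh t) := by
    simpa using pow_div_factorial_le_exp _ (by positivity : 0 ≤ z * cosh t) 2
  have hcosh : exp t ≤ 2 * cosh t := by
    rw [cosh_eq]; linarith [exp_pos (-t)]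
  rw [neg_mul, exp_neg, exp_neg, ← div_eq_mul_inv, ← div_eq_mul_inv,
    div_le_div_iff₀ (exp_pos _) (exp_pos _), div_mul_eq_mul_div, le_div_iff₀ (by positivity)]
  calc cosh t * exp t * z ^ 2 ≤ cosh t * (2 * cosh t) * z ^ 2 := by gcongr
    _ = 4 * ((z * cosh t) ^ 2 / 2) := by ring
    _ ≤ 4 * exp (z * cosh t) := by gcongr

theorem integrableOn_cosh_mul_exp_neg_mul_cosh (hz : 0 < z) :
    IntegrableOn (fun t => cosh t * exp (-z * cosh t)) (Ioi 0) := by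
  refine Integrable.mono' ((exp_neg_integrableOn_Ioi 0 one_pos).const_mul (4 / z ^ 2))
    (by fun_prop) (ae_of_all _ fun t => ?_)
  rw [norm_of_nonneg (by positivity)]
  simpa using cosh_mul_exp_neg_mul_cosh_le hz t

theorem integrableOn_exp_neg_mul_cosh_mul {g : ℝ → ℝ} (hz : 0 < z) (hg : Continuous g)
    {C : ℝ} (hgC : ∀ t, |g t| ≤ C * cosh t) :
    IntegrableOn (fun t => exp (-z * cosh t) * g t) (Ioi 0) := by
  refine Integrable.mono' ((integrableOn_cosh_mul_exp_neg_mul_cosh hz).const_mul C)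
    (by fun_prop) (ae_of_all _ fun t => ?_)
  rw [norm_mul, norm_of_nonneg (exp_pos _).le, Real.norm_eq_abs]
  calc exp (-z * cosh t) * |g t| ≤ exp (-z * cosh t) * (C * cosh t) := by gcongr; exact hgC t
    _ = C * (cosh t * exp (-z * cosh t)) := by ring

theorem cosh_add_one_pos (t : ℝ) : 0 < cosh t + 1 := by
  linarith [one_le_cosh t]

theorem integrableOn_exp_neg_mul_cosh (hz : 0 < z) :
    IntegrableOn (fun t => exp (-z * cosh t)) (Ioi 0) := by
  simpa only [mul_one] using integrableOn_exp_neg_mul_cosh_mul hz (g := fun _ => 1)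
    continuous_const (C := 1)
    (fun t => by rw [abs_one, one_mul]; exact one_le_cosh t)

theorem integrableOn_exp_neg_mul_cosh_mul_cosh (hz : 0 < z) :
    IntegrableOn (fun t => exp (-z * cosh t) * cosh t) (Ioi 0) :=
  integrableOn_exp_neg_mul_cosh_mul hz continuous_cosh (C := 1)
    (fun t => by rw [one_mul, abs_of_pos (cosh_pos t)])

theorem integrableOn_exp_neg_mul_cosh_mul_cosh_add_one (hz : 0 < z) :
    IntegrableOn (fun t => exp (-z * cosh t) * (cosh t + 1)) (Ioi 0) :=
  integrableOn_exp_neg_mul_cosh_mul hz (by fun_prop) (C := 2)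
    (fun t => by rw [abs_of_pos (cosh_add_one_pos t)]; linarith [one_le_cosh t])

theorem integrableOn_exp_neg_mul_cosh_div_cosh_add_one (hz : 0 < z) :
    IntegrableOn (fun t => exp (-z * cosh t) / (cosh t + 1)) (Ioi 0) := by
  simp_rw [div_eq_mul_inv]
  refine integrableOn_exp_neg_mul_cosh_mul hz
    (continuous_cosh.add continuous_const |>.inv₀ fun t => (cosh_add_one_pos t).ne') (C := 1)
    (fun t => ?_)
  rw [abs_of_pos (inv_pos.2 (cosh_add_one_pos t)), one_mul,
    inv_le_iff_one_le_mul₀ (cosh_add_one_pos t)]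
  nlinarith [one_le_cosh t]

end Integrability

section Bessel

variable {z : ℝ}

theorem besselK_zero_eq (z : ℝ) : besselK 0 z = ∫ t in Ioi 0, exp (-z * cosh t) := by
  simp [besselK]

theorem besselK_one_eq (z : ℝ) : besselK 1 z = ∫ t in Ioi 0, exp (-z * cosh t) * cosh t := by
  simp [besselK]

theorem besselK_zero_pos (hz : 0 < z) : 0 < besselK 0 z := by
  rw [besselK_zero_eq, setIntegral_pos_iff_support_of_nonneg_ae
    (ae_of_all _ fun t => (exp_pos _).le) (integrableOn_exp_neg_mul_cosh hz)]
  simp [Function.support, exp_ne_zero]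

theorem besselK_zero_le_besselK_one (hz : 0 < z) : besselK 0 z ≤ besselK 1 z := by
  rw [besselK_zero_eq, besselK_one_eq]
  refine setIntegral_mono_on (integrableOn_exp_neg_mul_cosh hz)
    (integrableOn_exp_neg_mul_cosh_mul_cosh hz) measurableSet_Ioi fun t _ => ?_
  exact le_mul_of_one_le_right (exp_pos _).le (one_le_cosh t)

theorem hasDerivAt_exp_neg_mul_cosh_mul_sinh_div (z t : ℝ) :
    HasDerivAt (fun t => exp (-z * cosh t) * (sinh t / (cosh t + 1)))
      (exp (-z * cosh t) / (cosh t + 1) -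
        z * (exp (-z * cosh t) * cosh t - exp (-z * cosh t))) t := by
  refine HasDerivAt.congr_deriv (((hasDerivAt_cosh t).const_mul (-z)).exp.mul
    ((hasDerivAt_sinh t).div ((hasDerivAt_cosh t).add_const 1) (cosh_add_one_pos t).ne')) ?_
  have := (cosh_add_one_pos t).ne'
  field_simp
  linear_combination (-1 - z - z * cosh t) * sinh_sq t

theorem tendsto_exp_neg_mul_cosh_mul_sinh_div (hz : 0 < z) :
    Tendsto (fun t => exp (-z * cosh t) * (sinh t / (cosh t + 1))) atTop (𝓝 0) := by
  have hdecay : Tendsto (fun t => 4 / z ^ 2 * exp (-t)) atTop (𝓝 0) := by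
    simpa using tendsto_exp_neg_atTop_nhds_zero.const_mul (4 / z ^ 2)
  refine squeeze_zero_norm (fun t => ?_) hdecay
  have hc := one_le_cosh t
  have hsinh : |sinh t| ≤ cosh t + 1 :=
    abs_le.2 ⟨by nlinarith [sinh_sq t], by nlinarith [sinh_sq t]⟩
  rw [norm_mul, norm_of_nonneg (exp_pos _).le, norm_div, Real.norm_eq_abs, Real.norm_eq_abs,
    abs_of_pos (cosh_add_one_pos t)]
  calc exp (-z * cosh t) * (|sinh t| / (cosh t + 1)) ≤ exp (-z * cosh t) * 1 := by
        gcongr; exact div_le_one_of_le₀ hsinh (cosh_add_one_pos t).le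
    _ ≤ cosh t * exp (-z * cosh t) := by
        rw [mul_one]; exact le_mul_of_one_le_left (exp_pos _).le hc
    _ ≤ 4 / z ^ 2 * exp (-t) := cosh_mul_exp_neg_mul_cosh_le hz t

theorem integral_exp_neg_mul_cosh_div_cosh_add_one (hz : 0 < z) :
    ∫ t in Ioi 0, exp (-z * cosh t) / (cosh t + 1) = z * (besselK 1 z - besselK 0 z) := by
  have hw := integrableOn_exp_neg_mul_cosh hz
  have hwc := integrableOn_exp_neg_mul_cosh_mul_cosh hz
  have hwd := integrableOn_exp_neg_mul_cosh_div_cosh_add_one hz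
  have h := integral_Ioi_of_hasDerivAt_of_tendsto'
    (fun t _ => hasDerivAt_exp_neg_mul_cosh_mul_sinh_div z t)
    (hwd.sub ((hwc.sub hw).const_mul z)) (tendsto_exp_neg_mul_cosh_mul_sinh_div hz)
  rw [integral_sub hwd, integral_const_mul, integral_sub hwc hw] at h
  · rw [besselK_one_eq, besselK_zero_eq]
    simpa [sub_eq_zero] using h
  exact (hwc.sub hw).const_mul z

theorem besselK_one_div_besselK_zero_le (hz : 0 < z) :
    besselK 1 z / besselK 0 z ≤ 1 + 1 / (2 * z) := by
  have hhalf : ∫ t in Ioi 0, exp (-z * cosh t) / (cosh t + 1) ≤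
      ∫ t in Ioi 0, exp (-z * cosh t) / 2 :=
    setIntegral_mono_on (integrableOn_exp_neg_mul_cosh_div_cosh_add_one hz)
      ((integrableOn_exp_neg_mul_cosh hz).div_const 2) measurableSet_Ioi fun t _ =>
        div_le_div_of_nonneg_left (exp_pos _).le two_pos (by linarith [one_le_cosh t])
  rw [integral_exp_neg_mul_cosh_div_cosh_add_one hz, integral_div, ← besselK_zero_eq] at hhalf
  have hK₀ := besselK_zero_pos hz
  rw [div_le_iff₀ hK₀]
  field_simp
  nlinarith

theorem sq_besselK_zero_le (hz : 0 < z) :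
    besselK 0 z ^ 2 ≤ z * (besselK 1 z ^ 2 - besselK 0 z ^ 2) := by
  have hcs := sq_integral_le_integral_mul_mul_integral_div (μ := volume.restrict (Ioi 0))
    (f := fun t => exp (-z * cosh t)) (g := fun t => cosh t + 1) (fun _ => (exp_pos _).le)
    cosh_add_one_pos (integrableOn_exp_neg_mul_cosh hz)
    (integrableOn_exp_neg_mul_cosh_mul_cosh_add_one hz)
    (integrableOn_exp_neg_mul_cosh_div_cosh_add_one hz)
  have hsum : ∫ t in Ioi 0, exp (-z * cosh t) * (cosh t + 1) = besselK 1 z + besselK 0 z := by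
    simp_rw [mul_add, mul_one]
    rw [integral_add (integrableOn_exp_neg_mul_cosh_mul_cosh hz)
      (integrableOn_exp_neg_mul_cosh hz), besselK_one_eq, besselK_zero_eq]
  rw [hsum, integral_exp_neg_mul_cosh_div_cosh_add_one hz, ← besselK_zero_eq] at hcs
  linear_combination hcs

theorem le_besselK_one_div_besselK_zero (hz : 0 < z) :
    (√(z ^ 2 + z + 1) + 1) / (z + 1) ≤ besselK 1 z / besselK 0 z := by
  have hK₀ := besselK_zero_pos hz
  refine sqrt_add_one_div_le_of_one_le_mul_sq_sub_one hz.le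
    (div_nonneg (hK₀.le.trans (besselK_zero_le_besselK_one hz)) hK₀.le) ?_
  rw [div_pow, div_sub_one (pow_pos hK₀ 2).ne', mul_div_assoc', le_div_iff₀ (by positivity),
    one_mul]
  exact sq_besselK_zero_le hz

end Bessel

theorem laplace_eigenvalue_growth (ε : ℝ) (hε : 0 < ε) (k : ℕ) (hk : 1 ≤ k) :
    2 * π ^ 2 * ε * (k : ℝ) ≤
      2 * π ^ 2 * ε * (k : ℝ) *
        ((Real.sqrt ((π * ε * (k : ℝ)) ^ 2 + π * ε * (k : ℝ) + 1) + 1) /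
          (π * ε * (k : ℝ) + 1)) ∧
    2 * π ^ 2 * ε * (k : ℝ) *
        ((Real.sqrt ((π * ε * (k : ℝ)) ^ 2 + π * ε * (k : ℝ) + 1) + 1) /
          (π * ε * (k : ℝ) + 1)) ≤
      2 * π ^ 2 * ε * (k : ℝ) *
        (besselK 1 (π * ε * (k : ℝ)) / besselK 0 (π * ε * (k : ℝ))) ∧
    2 * π ^ 2 * ε * (k : ℝ) *
        (besselK 1 (π * ε * (k : ℝ)) / besselK 0 (π * ε * (k : ℝ))) ≤
      2 * π ^ 2 * ε * (k : ℝ) + π := by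
  have hk₀ : (0 : ℝ) < k := by exact_mod_cast hk
  have hz : 0 < π * ε * k := by positivity
  have hscale : 0 ≤ 2 * π ^ 2 * ε * k := by positivity
  refine ⟨le_mul_of_one_le_right hscale (one_le_sqrt_add_one_div hz.le),
    mul_le_mul_of_nonneg_left (le_besselK_one_div_besselK_zero hz) hscale, ?_⟩
  calc 2 * π ^ 2 * ε * k * (besselK 1 (π * ε * k) / besselK 0 (π * ε * k))
      ≤ 2 * π ^ 2 * ε * k * (1 + 1 / (2 * (π * ε * k))) :=
        mul_le_mul_of_nonneg_left (besselK_one_div_besselK_zero_le hz) hscale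
    _ = 2 * π ^ 2 * ε * k + π := by field_simp
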